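/- Let R be a reduced elliptic root system of rank l = 1 with fundamental-set Π ∪ {a} and associated maps k and g. Write Π = {α₁, α₀}, where {π(α₁)} is a base of π(R), and assume k(α₁) ≤ k(α₀) in case {π(α₀)} is also a base of π(R). Then k(α₁) = 1 and the quadruple ((α₀^∨,α₁), k(α₀), g(α₀), g(α₁)) is exactly one of the following eleven tuples: (−2,1,∅,∅); (−2,1,∅,2ℤ+1); (−2,1,2ℤ+1,∅); (−2,1,2ℤ+1,2ℤ+1); (−2,2,∅,∅); (−2,2,2ℤ+1,∅); (−1,1,∅,∅); (−1,1,∅,2ℤ+1); (−1,2,∅,∅); (−1,2,∅,2ℤ+1); (−1,4,∅,∅). -/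

import Mathlib

/- ## Preliminaries: extended affine root systems (Saito) -/

noncomputable section

open Set

/-- The reflection `s_v : z ↦ z - (v^∨, z) v = z - (2 (v,z)/(v,v)) v` associated to a
bilinear form `B` and a vector `v`.  (When `B v v = 0` this is the identity, by the
`division by zero = 0` convention; reflections are only ever used at non-isotropic `v`.) -/
def srefl {V : Type*} [AddCommGroup V] [Module ℝ V]
    (B : LinearMap.BilinForm ℝ V) (v : V) : Module.End ℝ V :=
  LinearMap.id - (((2 * (B v v)⁻¹) • (B v)).smulRight v)

/-- The Weyl group `W_S` generated by the reflections in the elements of `S`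
(realized as the multiplicative closure; each generator is an involution, so this
agrees with the generated group). -/
def weyl {V : Type*} [AddCommGroup V] [Module ℝ V]
    (B : LinearMap.BilinForm ℝ V) (S : Set V) : Submonoid (Module.End ℝ V) :=
  Submonoid.closure (srefl B '' S)

/-- The orbit `W_S · α`. -/
def worbit {V : Type*} [AddCommGroup V] [Module ℝ V]
    (B : LinearMap.BilinForm ℝ V) (S : Set V) (α : V) : Set V :=
  {v | ∃ w ∈ weyl B S, w α = v}

/-- `V⁰`, the set of isotropic vectors. -/
def nullSet {V : Type*} [AddCommGroup V] [Module ℝ V]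
    (B : LinearMap.BilinForm ℝ V) : Set V := {v | B v v = 0}

/-- `ℤR`, the subgroup of `V` generated by `R`. -/
def zspan {V : Type*} [AddCommGroup V] (R : Set V) : AddSubgroup V :=
  AddSubgroup.closure R

/-- `ℤ≥0 Π`, the set of nonnegative-integer linear combinations of elements of `Π`. -/
def nnspan {V : Type*} [AddCommMonoid V] (P : Set V) : Set V :=
  (AddSubmonoid.closure P : Set V)

/-- `(R, V)` is an `n`-extended affine root system of rank `l` (K. Saito). -/
structure IsEARS {V : Type*} [AddCommGroup V] [Module ℝ V]
    (B : LinearMap.BilinForm ℝ V) (R : Set V) (l n : ℕ) : Prop where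
  rank_pos : 1 ≤ l
  findim : FiniteDimensional ℝ V
  symm : ∀ u v, B u v = B v u
  posSemidef : ∀ v, 0 ≤ B v v
  dim_eq : Module.finrank ℝ V = l + n
  null_eq : nullSet B = (LinearMap.ker B : Set V)
  dim_null : Module.finrank ℝ (LinearMap.ker B) = n
  /-- (AX1), first half -/
  root_nonisotropic : ∀ α ∈ R, B α α ≠ 0
  /-- (AX1), second half -/
  span_eq_top : Submodule.span ℝ R = ⊤
  /-- (AX2) -/
  free : Module.Free ℤ (zspan R)
  /-- (AX2) -/
  rank_eq : Module.finrank ℤ (zspan R) = l + n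
  /-- (AX3): `(α^∨, β) ∈ ℤ` -/
  integral : ∀ α ∈ R, ∀ β ∈ R, ∃ m : ℤ, 2 * B α β = (m : ℝ) * B α α
  /-- (AX4) -/
  reflect : ∀ α ∈ R, srefl B α '' R = R
  /-- (AX5) -/
  connected : ∀ S' ⊆ R, S'.Nonempty → S' ≠ R → ∃ x ∈ S', ∃ y ∈ R \ S', B x y ≠ 0

/-- `R` is reduced, i.e. `R ∩ 2R = ∅`. -/
def IsReducedRS {V : Type*} [AddCommGroup V] [Module ℝ V] (R : Set V) : Prop :=
  ∀ α ∈ R, (2 : ℤ) • α ∉ R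

/-- `Π₀` is a base (with `m` elements) of the root system `R₀`:
`Π₀ ⊆ R₀`, `Π₀` consists of `m` linearly independent elements, and
`R₀ = (R₀ ∩ ℤ≥0 Π₀) ∪ (R₀ ∩ ℤ≤0 Π₀)`. -/
def IsBaseSet {M : Type*} [AddCommGroup M] [Module ℝ M] (R₀ P₀ : Set M) (m : ℕ) : Prop :=
  P₀ ⊆ R₀ ∧ P₀.Finite ∧ P₀.ncard = m ∧
  LinearIndependent ℝ ((↑) : P₀ → M) ∧
  R₀ = (R₀ ∩ nnspan P₀) ∪ (R₀ ∩ (-(nnspan P₀)))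

/-- The bilinear form induced on a quotient `V ⧸ W` by a form vanishing on `W`. -/
def quotForm {V : Type*} [AddCommGroup V] [Module ℝ V]
    (W : Submodule ℝ V) (B : LinearMap.BilinForm ℝ V)
    (h1 : ∀ w ∈ W, B w = 0) (h2 : ∀ v : V, ∀ w ∈ W, B v w = 0) :
    LinearMap.BilinForm ℝ (V ⧸ W) :=
  Submodule.liftQ W
    { toFun := fun v => Submodule.liftQ W (B v) (fun w hw => LinearMap.mem_ker.mpr (h2 v w hw))
      map_add' := fun u v => by
        ext x
        simp
      map_smul' := fun c v => by
        ext x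
        simp }
    (fun w hw => by
      simp only [LinearMap.mem_ker]
      ext x
      simp [h1 w hw])

end

/-- A fundamental-set `Π ∪ {a}` of a reduced elliptic root system `R` of rank `l`:
(FS1) `a ∈ (ℤR)⁰` and `(ℤR)⁰ = ℤa ⊕ ℤb` for some `b`;
(FS2) `|Π| = l+1`, `Π ⊆ R` and `π_a(Π)` is a base of the affine root system `π_a(R)`. -/
def IsFundamentalSet {V : Type*} [AddCommGroup V] [Module ℝ V]
    (B : LinearMap.BilinForm ℝ V) (R : Set V) (l : ℕ) (P : Set V) (a : V) : Prop :=
  a ∈ zspan R ∧ B a a = 0 ∧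
  (∃ b : V, b ∈ zspan R ∧ B b b = 0 ∧
    ((zspan R : Set V) ∩ nullSet B = {v | ∃ m n : ℤ, v = m • a + n • b}) ∧
    (∀ m n : ℤ, m • a + n • b = 0 → m = 0 ∧ n = 0)) ∧
  P ⊆ R ∧ P.Finite ∧ P.ncard = l + 1 ∧
  IsBaseSet ((Submodule.span ℝ {a}).mkQ '' R) ((Submodule.span ℝ {a}).mkQ '' P) (l + 1)

/-- The subset `⋃_{ε=±1} ((εα + ℤ kα a) ∪ (2εα + gα·kα a))` of the plane `ℝα ⊕ ℝa`;
here `gα : Bool`, with `false` encoding `g(α) = ∅` and `true` encoding `g(α) = 2ℤ+1`. -/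
def kgLine {V : Type*} [AddCommGroup V] (a α : V) (kα : ℕ) (gα : Bool) : Set V :=
  {v | ∃ ε m : ℤ, (ε = 1 ∨ ε = -1) ∧ v = ε • α + (m * kα) • a} ∪
  {v | gα = true ∧ ∃ ε m : ℤ, (ε = 1 ∨ ε = -1) ∧ Odd m ∧ v = (2 * ε) • α + (m * kα) • a}

/-- `k : Π → ℕ` and `g : Π → {∅, 2ℤ+1}` are the maps associated to the fundamental-set
`Π ∪ {a}`, i.e. `R ∩ (ℝα ⊕ ℝa) = ⋃_{ε=±1} ((εα + ℤ k(α) a) ∪ (2εα + g(α)k(α)a))`. -/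
def IsKG {V : Type*} [AddCommGroup V] [Module ℝ V]
    (R : Set V) (a : V) (P : Set V) (k : V → ℕ) (g : V → Bool) : Prop :=
  ∀ α ∈ P, 0 < k α ∧
    R ∩ (Submodule.span ℝ {α, a} : Set V) = kgLine a α (k α) (g α)

/-- `c(α) = 1` if `g(α) = ∅`, `c(α) = 2` if `g(α) = 2ℤ+1`. -/
def cMap {V : Type*} (g : V → Bool) (α : V) : ℕ := if g α then 2 else 1

/-- `α* := c(α)·α + k(α)·a`. -/
def starMap {V : Type*} [AddCommGroup V] (a : V) (k : V → ℕ) (g : V → Bool) (α : V) : V :=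
  (cMap g α : ℤ) • α + (k α : ℤ) • a

/-- `B₊ := {α, α* | α ∈ Π}`. -/
def bplus {V : Type*} [AddCommGroup V] (a : V) (P : Set V) (k : V → ℕ) (g : V → Bool) :
    Set V :=
  P ∪ (starMap a k g '' P)

/-- `B := B₊ ∪ (−B₊)`. -/
def bfull {V : Type*} [AddCommGroup V] (a : V) (P : Set V) (k : V → ℕ) (g : V → Bool) :
    Set V :=
  bplus a P k g ∪ (-(bplus a P k g))

/-- The set `R(Π,k,g) = ⋃_{w ∈ W_Π} ⋃_{α ∈ Π} ((w(α) + ℤk(α)a) ∪ (w(2α) + g(α)k(α)a))`. -/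
def kgUnion {V : Type*} [AddCommGroup V] [Module ℝ V]
    (B : LinearMap.BilinForm ℝ V) (P : Set V) (a : V) (k : V → ℕ) (g : V → Bool) :
    Set V :=
  {v | ∃ w ∈ weyl B P, ∃ α ∈ P,
    (∃ m : ℤ, v = w α + (m * k α) • a) ∨
    (g α = true ∧ ∃ m : ℤ, Odd m ∧ v = w ((2 : ℤ) • α) + (m * k α) • a)}

/-
Modulo `V⁰` every root `β` is `r α₁` with `r ∈ {±1, ±2}`, since `π(R)` has the base `{π(α₁)}`
and `(β^∨, α₁) ∈ ℤ`; and `α₀ ≡ r₀ α₁` with `r₀ ∈ {-1, -2}`, since `s_{α₁}(α₀) = α₀ - 2r₀α₁` is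
a root and `{α₁, α₀}` is a base modulo `a`. Hence `(α₀^∨, α₁) = 2/r₀`, and the roots lie in the
lattice `{r α₁ + x a + y (α₀ - r₀ α₁)}`, on which reflections act by explicit integer formulas.
Reflections in `α₁` and `α₀` never change `x` and move `y` in steps of `-2/r₀`, so up to sign every
root is conjugate to one on the line through `α₁`, where `k(α₁) ∣ x`, or through `α₀`, where
`k(α₀) ∣ x`. As `a ∈ ℤR`, this gives `k(α₁) = 1` if `r₀ = -2` and `gcd(k(α₁), k(α₀)) = 1` if
`r₀ = -1`. A few explicit reflections then give `k(α₁) ∣ 2k(α₀)`, `k(α₀) ∣ 2k(α₁)` (or `k(α₀) ∣ 4`),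
and the constraints on `g`.
-/

theorem LinearIndependent.eq_zero_of_triple {K M : Type*} [Ring K] [AddCommGroup M] [Module K M]
    {x y z : M} (h : LinearIndependent K ![x, y, z]) {p q r : K}
    (hpqr : p • x + q • y + r • z = 0) : p = 0 ∧ q = 0 ∧ r = 0 := by
  have := Fintype.linearIndependent_iff.1 h ![p, q, r]
    (by simpa [Fin.sum_univ_three, add_assoc] using hpqr)
  exact ⟨this 0, this 1, this 2⟩

theorem IsBaseSet.exists_eq_zsmul_of_singleton {M : Type*} [AddCommGroup M] [Module ℝ M]
    {R₀ : Set M} {x y : M} {m : ℕ} (h : IsBaseSet R₀ {x} m) (hy : y ∈ R₀) :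
    ∃ n : ℤ, y = n • x := by
  rw [h.2.2.2.2] at hy
  rcases hy with ⟨-, hy⟩ | ⟨-, hy⟩
  · obtain ⟨n, rfl⟩ := AddSubmonoid.mem_closure_singleton.1 hy
    exact ⟨n, by simp⟩
  · obtain ⟨n, hn⟩ := AddSubmonoid.mem_closure_singleton.1 (Set.mem_neg.1 hy)
    exact ⟨-n, by simp [hn]⟩

theorem IsBaseSet.exists_zsmul_eq_nsmul_add_nsmul {M : Type*} [AddCommGroup M] [Module ℝ M]
    {R₀ : Set M} {x y z : M} {m : ℕ} (h : IsBaseSet R₀ {x, y} m) (hz : z ∈ R₀) :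
    ∃ s : ℤ, (s = 1 ∨ s = -1) ∧ ∃ p q : ℕ, s • z = p • x + q • y := by
  rw [h.2.2.2.2] at hz
  rcases hz with ⟨-, hz⟩ | ⟨-, hz⟩
  · obtain ⟨p, q, hpq⟩ := (AddSubmonoid.mem_closure_pair _ _ _).1 hz
    exact ⟨1, .inl rfl, p, q, by simp [hpq]⟩
  · obtain ⟨p, q, hpq⟩ := (AddSubmonoid.mem_closure_pair _ _ _).1 (Set.mem_neg.1 hz)
    exact ⟨-1, .inr rfl, p, q, by simp [hpq]⟩

theorem IsBaseSet.neg_singleton {M : Type*} [AddCommGroup M] [Module ℝ M] {R₀ : Set M} {x : M}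
    (h : IsBaseSet R₀ {x} 1) (hx : -x ∈ R₀) : IsBaseSet R₀ {-x} 1 := by
  obtain ⟨-, -, -, hli, hR₀⟩ := h
  have hx0 : x ≠ 0 := by simpa using hli
  have hnn : nnspan {-x} = -nnspan {x} := by
    rw [nnspan, nnspan, ← Set.neg_singleton, AddSubmonoid.closure_neg, AddSubmonoid.coe_neg]
  refine ⟨by simpa using hx, Set.finite_singleton _, by simp, by simpa using hx0, ?_⟩
  rw [hnn, neg_neg, Set.union_comm]
  exact hR₀

theorem exists_zsmul_eq_of_isBaseSet {V : Type*} [AddCommGroup V] [Module ℝ V] {R : Set V}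
    {α₁ α₀ a β : V} {m : ℕ}
    (hbase : IsBaseSet ((Submodule.span ℝ {a}).mkQ '' R)
      ((Submodule.span ℝ {a}).mkQ '' {α₁, α₀}) m) (hβ : β ∈ R) :
    ∃ s : ℤ, (s = 1 ∨ s = -1) ∧ ∃ p q : ℕ, ∃ t : ℝ, s • β = p • α₁ + q • α₀ + t • a := by
  rw [Set.image_pair] at hbase
  obtain ⟨s, hs, p, q, hpq⟩ := hbase.exists_zsmul_eq_nsmul_add_nsmul ⟨β, hβ, rfl⟩
  rw [← map_zsmul, ← map_nsmul, ← map_nsmul, ← map_add, Submodule.mkQ_apply,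
    Submodule.mkQ_apply, Submodule.Quotient.eq, Submodule.mem_span_singleton] at hpq
  obtain ⟨t, ht⟩ := hpq
  exact ⟨s, hs, p, q, t, by rw [ht]; abel⟩

theorem mem_kgLine_add_zsmul_iff {V : Type*} [AddCommGroup V] {a α : V} {k : ℕ} {g : Bool}
    (hli : LinearIndependent ℤ ![α, a]) (x : ℤ) :
    α + x • a ∈ kgLine a α k g ↔ (k : ℤ) ∣ x := by
  constructor
  · rintro (⟨ε, m, -, h⟩ | ⟨-, ε, m, -, -, h⟩) <;>
      nth_rw 1 [← one_smul ℤ α] at h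
    · obtain ⟨-, rfl⟩ := hli.eq_of_pair h
      exact Dvd.intro_left m rfl
    · obtain ⟨h₁, -⟩ := hli.eq_of_pair h
      omega
  · rintro ⟨m, rfl⟩
    exact Or.inl ⟨1, m, .inl rfl, by rw [one_smul, mul_comm]⟩

theorem IsKG.add_zsmul_mem_iff {V : Type*} [AddCommGroup V] [Module ℝ V] {R P : Set V} {a α : V}
    {k : V → ℕ} {g : V → Bool} (hkg : IsKG R a P k g) (hα : α ∈ P)
    (hli : LinearIndependent ℤ ![α, a]) (x : ℤ) : α + x • a ∈ R ↔ (k α : ℤ) ∣ x := by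
  rw [← mem_kgLine_add_zsmul_iff hli, ← (hkg α hα).2, Set.mem_inter_iff, iff_self_and]
  exact fun _ => add_mem (Submodule.subset_span (by simp))
    (zsmul_mem (Submodule.subset_span (by simp)) _)

theorem IsKG.two_zsmul_add_mem {V : Type*} [AddCommGroup V] [Module ℝ V] {R P : Set V} {a α : V}
    {k : V → ℕ} {g : V → Bool} (hkg : IsKG R a P k g) (hα : α ∈ P) (hg : g α = true) :
    (2 : ℤ) • α + (k α : ℤ) • a ∈ R := by
  have : (2 : ℤ) • α + (k α : ℤ) • a ∈ kgLine a α (k α) (g α) :=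
    Or.inr ⟨hg, 1, 1, .inl rfl, odd_one, by simp⟩
  rw [← (hkg α hα).2] at this
  exact this.1

/-- Rank-one root data in the lattice coordinates `(r, x, y) ↦ r α₁ + x a + y (α₀ - r₀ α₁)`:
`T r x y` says that this vector is a root. The last two basis vectors are isotropic, so
`(γ^∨, β) = 2r/r'` and `reflect` is `s_γ(β) = β - (γ^∨, β) γ`. -/
structure RootCoordinates (T : ℤ → ℤ → ℤ → Prop) (r₀ : ℤ) (k₁ k₀ : ℕ) (g₁ g₀ : Bool) :
    Prop where
  reflect {r x y r' x' y' t : ℤ} : T r x y → T r' x' y' → t * r' = 2 * r →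
    T (-r) (x - t * x') (y - t * y')
  range {r x y : ℤ} : T r x y → r = 1 ∨ r = -1 ∨ r = 2 ∨ r = -2
  line₁ (x : ℤ) : T 1 x 0 ↔ (k₁ : ℤ) ∣ x
  line₀ (x : ℤ) : T r₀ x 1 ↔ (k₀ : ℤ) ∣ x
  double₁ : g₁ = true → T 2 k₁ 0
  double₀ : g₀ = true → T (2 * r₀) k₀ 2
  primitive (d : ℕ) : (∀ r x y, T r x y → (d : ℤ) ∣ x) → d = 1

namespace RootCoordinates

variable {T : ℤ → ℤ → ℤ → Prop} {r₀ : ℤ} {k₁ k₀ : ℕ} {g₁ g₀ : Bool}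

theorem reflect_of_eq (h : RootCoordinates T r₀ k₁ k₀ g₁ g₀) {r x y r' x' y' t r'' x'' y'' : ℤ}
    (hβ : T r x y) (hγ : T r' x' y') (ht : t * r' = 2 * r)
    (hr : r'' = -r) (hx : x'' = x - t * x') (hy : y'' = y - t * y') : T r'' x'' y'' := by
  subst hr hx hy
  exact h.reflect hβ hγ ht

theorem simple₁ (h : RootCoordinates T r₀ k₁ k₀ g₁ g₀) : T 1 0 0 :=
  (h.line₁ 0).2 (dvd_zero _)

theorem simple₀ (h : RootCoordinates T r₀ k₁ k₀ g₁ g₀) : T r₀ 0 1 :=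
  (h.line₀ 0).2 (dvd_zero _)

theorem neg_first (h : RootCoordinates T r₀ k₁ k₀ g₁ g₀) {r x y : ℤ} (hβ : T r x y) :
    T (-r) x y :=
  h.reflect_of_eq hβ h.simple₁ (t := 2 * r) (by ring) rfl (by ring) (by ring)

theorem add_third (h : RootCoordinates T r₀ k₁ k₀ g₁ g₀) {s : ℤ} (hs : s * r₀ = -2) {x y : ℤ}
    (hβ : T 1 x y) : T 1 x (y + s) :=
  h.neg_first (r := -1) <| h.reflect_of_eq hβ h.simple₀ (t := -s) (by linarith) rfl (by ring)
    (by ring)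

theorem sub_third (h : RootCoordinates T r₀ k₁ k₀ g₁ g₀) {s : ℤ} (hs : s * r₀ = -2) {x y : ℤ}
    (hβ : T 1 x y) : T 1 x (y - s) :=
  h.reflect_of_eq (h.neg_first hβ) h.simple₀ (t := s) (by linarith) (by ring) (by ring) (by ring)

theorem add_mul_third (h : RootCoordinates T r₀ k₁ k₀ g₁ g₀) {s : ℤ} (hs : s * r₀ = -2)
    {x y : ℤ} (hβ : T 1 x y) (n : ℤ) : T 1 x (y + n * s) := by
  induction n using Int.induction_on with
  | zero => simpa using hβ
  | succ n ih => simpa [add_mul, add_assoc] using h.add_third hs ih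
  | pred n ih => simpa [sub_mul, add_sub_assoc] using h.sub_third hs ih

theorem exists_first_eq_one (h : RootCoordinates T r₀ k₁ k₀ g₁ g₀) {r x y : ℤ} (hβ : T r x y) :
    ∃ σ : ℤ, (σ = 1 ∨ σ = -1) ∧ T 1 (σ * x) (σ * y) := by
  rcases h.range hβ with rfl | rfl | rfl | rfl
  · exact ⟨1, .inl rfl, by simpa using hβ⟩
  · exact ⟨1, .inl rfl, by simpa using h.neg_first hβ⟩
  · exact ⟨-1, .inr rfl,
      h.neg_first (r := -1) (h.reflect_of_eq h.simple₁ hβ (t := 1) rfl rfl (by ring) (by ring))⟩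
  · exact ⟨1, .inl rfl,
      h.neg_first (r := -1) (h.reflect_of_eq h.simple₁ hβ (t := -1) rfl rfl (by ring) (by ring))⟩

theorem dvd_second_of_neg_two (h : RootCoordinates T (-2) k₁ k₀ g₁ g₀) {r x y : ℤ}
    (hβ : T r x y) : (k₁ : ℤ) ∣ x := by
  obtain ⟨σ, hσ, hβ₁⟩ := h.exists_first_eq_one hβ
  have hβ₀ : T 1 (σ * x) 0 := by
    simpa using h.add_mul_third (s := 1) (by norm_num) hβ₁ (-(σ * y))
  exact (Int.isUnit_iff.2 hσ).dvd_mul_left.1 ((h.line₁ _).1 hβ₀)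

theorem gcd_dvd_second_of_neg_one (h : RootCoordinates T (-1) k₁ k₀ g₁ g₀) {r x y : ℤ}
    (hβ : T r x y) : (Nat.gcd k₁ k₀ : ℤ) ∣ x := by
  obtain ⟨σ, hσ, hβ₁⟩ := h.exists_first_eq_one hβ
  have hβ₂ : T 1 (σ * x) (σ * y % 2) := by
    simpa [Int.emod_def, sub_eq_add_neg, mul_comm] using
      h.add_mul_third (s := 2) (by norm_num) hβ₁ (-(σ * y / 2))
  refine (Int.isUnit_iff.2 hσ).dvd_mul_left.1 ?_
  rcases Int.emod_two_eq (σ * y) with hy | hy <;> rw [hy] at hβ₂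
  · exact (Int.natCast_dvd_natCast.2 (Nat.gcd_dvd_left k₁ k₀)).trans ((h.line₁ _).1 hβ₂)
  · exact (Int.natCast_dvd_natCast.2 (Nat.gcd_dvd_right k₁ k₀)).trans
      ((h.line₀ _).1 (h.neg_first hβ₂))

theorem classify_of_neg_one (h : RootCoordinates T (-1) k₁ k₀ g₁ g₀) (hmin : k₁ ≤ k₀) :
    k₁ = 1 ∧ (k₀ = 1 ∨ k₀ = 2 ∧ g₁ = false) := by
  have hcop : Nat.Coprime k₁ k₀ :=
    h.primitive _ fun _ _ _ hβ => h.gcd_dvd_second_of_neg_one hβ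
  have hk₁ : k₁ ∣ 2 * k₀ := by
    have hu : T (-1) 0 2 :=
      h.reflect_of_eq h.simple₁ h.simple₀ (t := -2) (by ring) rfl (by ring) (by ring)
    have hv : T 1 (-(2 * k₀)) 0 :=
      h.reflect_of_eq hu ((h.line₀ k₀).2 dvd_rfl) (t := 2) (by ring) (by ring) (by ring)
        (by ring)
    exact_mod_cast dvd_neg.1 ((h.line₁ _).1 hv)
  have hk₀ : k₀ ∣ 2 * k₁ := by
    have hv : T (-1) (-(2 * k₁)) 1 :=
      h.reflect_of_eq (h.neg_first h.simple₀) ((h.line₁ k₁).2 dvd_rfl) (t := 2) (by ring)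
        (by ring) (by ring) (by ring)
    exact_mod_cast dvd_neg.1 ((h.line₀ _).1 hv)
  have hg₁ : g₁ = true → k₀ ∣ k₁ := fun hg => by
    have hv : T 1 k₁ 1 :=
      h.reflect_of_eq h.simple₀ (h.double₁ hg) (t := -1) (by ring) (by ring) (by ring)
        (by ring)
    exact_mod_cast (h.line₀ _).1 (h.neg_first hv)
  have hk₁2 : k₁ ∣ 2 := hcop.dvd_of_dvd_mul_right hk₁
  have : k₁ ≤ 2 := Nat.le_of_dvd two_pos hk₁2
  have : 0 < k₁ := Nat.pos_of_dvd_of_pos hk₁2 two_pos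
  have : k₀ ≤ 2 * k₁ := Nat.le_of_dvd (by omega) hk₀
  interval_cases k₁ <;> interval_cases k₀ <;> cases g₁ <;> simp_all +decide

theorem classify_of_neg_two (h : RootCoordinates T (-2) k₁ k₀ g₁ g₀) :
    k₁ = 1 ∧ g₀ = false ∧ (k₀ = 1 ∨ k₀ = 2 ∨ k₀ = 4 ∧ g₁ = false) := by
  obtain rfl : k₁ = 1 := h.primitive _ fun _ _ _ hβ => h.dvd_second_of_neg_two hβ
  have hg₀ : g₀ = false := by
    by_contra hg
    have := h.range (h.double₀ (by simpa using hg))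
    omega
  have hk₀ : k₀ ∣ 4 := by
    have hv : T (-2) (-4) 1 :=
      h.reflect_of_eq (h.neg_first h.simple₀) ((h.line₁ 1).2 (by simp)) (t := 4) (by ring)
        (by ring) (by ring) (by ring)
    exact_mod_cast dvd_neg.1 ((h.line₀ _).1 hv)
  have hg₁ : g₁ = true → k₀ ∣ 2 := fun hg => by
    have hv : T 2 2 1 :=
      h.reflect_of_eq h.simple₀ (h.double₁ hg) (t := -2) (by ring) (by ring) (by ring)
        (by ring)
    exact_mod_cast (h.line₀ _).1 (h.neg_first hv)
  have : k₀ ≤ 4 := Nat.le_of_dvd (by norm_num) hk₀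
  interval_cases k₀ <;> cases g₁ <;> simp_all

end RootCoordinates

section EllipticRootSystem

variable {V : Type*} [AddCommGroup V] [Module ℝ V] {B : LinearMap.BilinForm ℝ V}

theorem srefl_apply (v z : V) : srefl B v z = z - (2 * (B v v)⁻¹ * B v z) • v := by
  simp [srefl]

theorem apply_eq_mul_of_sub_smul_mem_ker (hsymm : ∀ u v, B u v = B v u) {α β γ : V} {r r' : ℝ}
    (hβ : β - r • α ∈ LinearMap.ker B) (hγ : γ - r' • α ∈ LinearMap.ker B) :
    B γ β = r' * r * B α α := by
  have hβα := LinearMap.congr_fun (LinearMap.mem_ker.1 hβ) α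
  have hγβ := LinearMap.congr_fun (LinearMap.mem_ker.1 hγ) β
  simp only [map_sub, map_smul, LinearMap.sub_apply, LinearMap.smul_apply, smul_eq_mul,
    LinearMap.zero_apply] at hβα hγβ
  linear_combination hγβ + r' * hβα + r' * hsymm α β

theorem srefl_eq_sub_smul (hsymm : ∀ u v, B u v = B v u) {α β γ : V} {r r' t : ℝ}
    (hα : B α α ≠ 0) (hβ : β - r • α ∈ LinearMap.ker B) (hγ : γ - r' • α ∈ LinearMap.ker B)
    (hr' : r' ≠ 0) (ht : t * r' = 2 * r) : srefl B γ β = β - t • γ := by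
  rw [srefl_apply, apply_eq_mul_of_sub_smul_mem_ker hsymm hγ hγ,
    apply_eq_mul_of_sub_smul_mem_ker hsymm hβ hγ]
  congr 2
  field_simp
  linear_combination -ht

theorem eq_of_sub_smul_mem_ker (hsymm : ∀ u v, B u v = B v u) {α β : V} {r r' : ℝ}
    (hα : B α α ≠ 0) (h : β - r • α ∈ LinearMap.ker B) (h' : β - r' • α ∈ LinearMap.ker B) :
    r = r' := by
  have hself : α - (1 : ℝ) • α ∈ LinearMap.ker B := by simp
  have := (apply_eq_mul_of_sub_smul_mem_ker hsymm h hself).symm.trans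
    (apply_eq_mul_of_sub_smul_mem_ker hsymm h' hself)
  simpa [hα] using this

theorem zsmul_add_sub_mem_ker {α u w : V} (hu : u ∈ LinearMap.ker B) (hw : w ∈ LinearMap.ker B)
    (r x y : ℤ) : r • α + x • u + y • w - (r : ℝ) • α ∈ LinearMap.ker B := by
  rw [Int.cast_smul_eq_zsmul, add_assoc, add_sub_cancel_left]
  exact add_mem (zsmul_mem hu x) (zsmul_mem hw y)

theorem IsEARS.exists_sub_zsmul_mem_ker {R : Set V} {l n : ℕ} (hE : IsEARS B R l n) {α β : V}
    (hbase : IsBaseSet ((LinearMap.ker B).mkQ '' R) {(LinearMap.ker B).mkQ α} 1)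
    (hα : α ∈ R) (hβ : β ∈ R) :
    ∃ ρ : ℤ, (ρ = 1 ∨ ρ = -1 ∨ ρ = 2 ∨ ρ = -2) ∧ β - ρ • α ∈ LinearMap.ker B := by
  obtain ⟨ρ, hρ⟩ := hbase.exists_eq_zsmul_of_singleton ⟨β, hβ, rfl⟩
  have hker : β - (ρ : ℝ) • α ∈ LinearMap.ker B := by
    rw [← Submodule.Quotient.eq, Int.cast_smul_eq_zsmul]
    simpa using hρ
  have hself : α - (1 : ℝ) • α ∈ LinearMap.ker B := by simp
  have hβα := apply_eq_mul_of_sub_smul_mem_ker hE.symm hself hker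
  have hββ := apply_eq_mul_of_sub_smul_mem_ker hE.symm hker hker
  have hαα := hE.root_nonisotropic α hα
  have hρ0 : (ρ : ℝ) ≠ 0 := fun h0 => hE.root_nonisotropic β hβ (by simp [hββ, h0])
  obtain ⟨m, hm⟩ := hE.integral β hβ α hα
  have hmρ : m * ρ = 2 := by
    rw [hβα, hββ] at hm
    have : (m : ℝ) * ρ = 2 := mul_right_cancel₀ (mul_ne_zero hρ0 hαα) (by linear_combination -hm)
    exact_mod_cast this
  have hdvd : ρ ∣ 2 := Dvd.intro_left m hmρ
  have := Int.le_of_dvd two_pos hdvd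
  have := Int.le_of_dvd two_pos (neg_dvd.2 hdvd)
  have : ρ ≠ 0 := by rintro rfl; simp at hρ0
  refine ⟨ρ, by omega, by rwa [← Int.cast_smul_eq_zsmul ℝ]⟩

theorem IsEARS.linearIndependent_of_isBaseSet {R : Set V} (hE : IsEARS B R 1 2) {α₁ α₀ a : V}
    {m : ℕ} (hbase : IsBaseSet ((Submodule.span ℝ {a}).mkQ '' R)
      ((Submodule.span ℝ {a}).mkQ '' {α₁, α₀}) m) :
    LinearIndependent ℝ ![α₁, α₀, a] := by
  have := hE.findim
  refine linearIndependent_of_top_le_span_of_card_eq_finrank ?_ (by simp [hE.dim_eq])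
  rw [← hE.span_eq_top, Submodule.span_le]
  intro β hβ
  obtain ⟨s, hs, p, q, t, hst⟩ := exists_zsmul_eq_of_isBaseSet hbase hβ
  have hmem : s • β ∈ Submodule.span ℝ (Set.range ![α₁, α₀, a]) := by
    rw [hst]
    exact add_mem (add_mem (nsmul_mem (Submodule.subset_span (Set.mem_range_self 0)) _)
      (nsmul_mem (Submodule.subset_span (Set.mem_range_self 1)) _))
      (Submodule.smul_mem _ _ (Submodule.subset_span (Set.mem_range_self 2)))
  rcases hs with rfl | rfl <;> simpa using hmem

theorem IsEARS.exists_neg_sub_zsmul_mem_ker {R : Set V} (hE : IsEARS B R 1 2)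
    {α₁ α₀ a : V} {m : ℕ}
    (hbase₁ : IsBaseSet ((LinearMap.ker B).mkQ '' R) {(LinearMap.ker B).mkQ α₁} 1)
    (hbase : IsBaseSet ((Submodule.span ℝ {a}).mkQ '' R)
      ((Submodule.span ℝ {a}).mkQ '' {α₁, α₀}) m) (hα₁ : α₁ ∈ R) (hα₀ : α₀ ∈ R) :
    ∃ r₀ : ℤ, (r₀ = -1 ∨ r₀ = -2) ∧ α₀ - r₀ • α₁ ∈ LinearMap.ker B := by
  obtain ⟨r₀, hr₀, hker⟩ := hE.exists_sub_zsmul_mem_ker hbase₁ hα₁ hα₀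
  refine ⟨r₀, ?_, hker⟩
  have hrefl : srefl B α₁ α₀ = α₀ - ((2 * r₀ : ℤ) : ℝ) • α₁ :=
    srefl_eq_sub_smul hE.symm (hE.root_nonisotropic α₁ hα₁)
      (by rwa [Int.cast_smul_eq_zsmul]) (by simp : α₁ - (1 : ℝ) • α₁ ∈ _) one_ne_zero
      (by push_cast; ring)
  have hmem : α₀ - (2 * r₀) • α₁ ∈ R := by
    rw [← hE.reflect α₁ hα₁]
    exact ⟨α₀, hα₀, by rw [hrefl, Int.cast_smul_eq_zsmul]⟩
  -- `s_{α₁}(α₀) = α₀ - 2 r₀ α₁` must be a positive or a negative root for the base `{α₁, α₀}`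
  obtain ⟨s, hs, p, q, t, hst⟩ := exists_zsmul_eq_of_isBaseSet hbase hmem
  obtain ⟨h₁, h₀, -⟩ := (hE.linearIndependent_of_isBaseSet hbase).eq_zero_of_triple
    (p := -(2 * r₀ * s : ℝ) - p) (q := (s : ℝ) - q) (r := -t)
    (by linear_combination (norm := module) hst)
  have h₁' : -(2 * r₀ * s) = p := by exact_mod_cast sub_eq_zero.1 h₁
  have h₀' : s = q := by exact_mod_cast sub_eq_zero.1 h₀
  rcases hs with rfl | rfl <;> omega

theorem IsEARS.exists_int_coords {R : Set V} (hE : IsEARS B R 1 2) {α₁ α₀ a : V} {r₀ : ℤ}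
    (hfs : IsFundamentalSet B R 1 {α₁, α₀} a) (hc : α₀ - r₀ • α₁ ∈ LinearMap.ker B) {β : V}
    (hβ : β ∈ R) : ∃ p q x : ℤ, β = p • α₁ + q • α₀ + x • a := by
  obtain ⟨-, haa, ⟨b, -, -, hnull, -⟩, hP, -, -, hbase⟩ := hfs
  have hli := hE.linearIndependent_of_isBaseSet hbase
  have hα₁ : α₁ ∈ R := hP (by simp)
  have hα₀ : α₀ ∈ R := hP (by simp)
  have hzspan {v : V} (hv : v ∈ R) : v ∈ zspan R := AddSubgroup.subset_closure hv
  obtain ⟨s, hs, p, q, t, hst⟩ := exists_zsmul_eq_of_isBaseSet hbase hβ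
  have hta : t • a ∈ (zspan R : Set V) ∩ nullSet B := by
    refine ⟨?_, by simp [nullSet, haa]⟩
    rw [show t • a = s • β - p • α₁ - q • α₀ by rw [hst]; abel]
    exact sub_mem (sub_mem (zsmul_mem (hzspan hβ) _) (nsmul_mem (hzspan hα₁) _))
      (nsmul_mem (hzspan hα₀) _)
  have hcn : α₀ - r₀ • α₁ ∈ (zspan R : Set V) ∩ nullSet B := by
    refine ⟨sub_mem (hzspan hα₀) (zsmul_mem (hzspan hα₁) _), ?_⟩
    rw [hE.null_eq]
    exact hc
  rw [hnull] at hta hcn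
  obtain ⟨m, n, hmn⟩ := hta
  obtain ⟨m', n', hmn'⟩ := hcn
  -- eliminating `b` between the two relations shows that `n • (α₀ - r₀ α₁)` is a multiple of `a`
  obtain ⟨-, hn, -⟩ := hli.eq_zero_of_triple (p := (n * r₀ : ℝ)) (q := -(n : ℝ))
    (r := n' * t - n' * m + n * m') (by linear_combination (norm := module) n' • hmn - n • hmn')
  obtain rfl : n = 0 := by exact_mod_cast neg_eq_zero.1 hn
  obtain ⟨-, -, ht⟩ := hli.eq_zero_of_triple (p := 0) (q := 0) (r := t - m)
    (by linear_combination (norm := module) hmn)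
  refine ⟨s * p, s * q, s * m, ?_⟩
  rw [sub_eq_zero] at ht
  subst ht
  rcases hs with rfl | rfl
  · linear_combination (norm := module) hst
  · linear_combination (norm := module) -hst

theorem IsEARS.eq_one_of_forall_dvd {R : Set V} (hE : IsEARS B R 1 2) {α₁ α₀ a : V} {r₀ : ℤ}
    (hfs : IsFundamentalSet B R 1 {α₁, α₀} a) (hc : α₀ - r₀ • α₁ ∈ LinearMap.ker B) (d : ℕ)
    (hd : ∀ r x y : ℤ, r • α₁ + x • a + y • (α₀ - r₀ • α₁) ∈ R → (d : ℤ) ∣ x) : d = 1 := by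
  have hsub : ∀ v ∈ zspan R, ∃ p q x : ℤ, (d : ℤ) ∣ x ∧ v = p • α₁ + q • α₀ + x • a := by
    intro v hv
    induction hv using AddSubgroup.closure_induction with
    | mem β hβ =>
      obtain ⟨p, q, x, rfl⟩ := hE.exists_int_coords hfs hc hβ
      exact ⟨p, q, x, hd (p + q * r₀) x q (by convert hβ using 1; module), rfl⟩
    | zero => exact ⟨0, 0, 0, dvd_zero _, by simp⟩
    | add u w _ _ hu hw =>
      obtain ⟨p, q, x, hx, rfl⟩ := hu
      obtain ⟨p', q', x', hx', rfl⟩ := hw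
      exact ⟨p + p', q + q', x + x', dvd_add hx hx', by module⟩
    | neg u _ hu =>
      obtain ⟨p, q, x, hx, rfl⟩ := hu
      exact ⟨-p, -q, -x, (dvd_neg).2 hx, by module⟩
  obtain ⟨p, q, x, hx, hax⟩ := hsub a hfs.1
  have hli := (hE.linearIndependent_of_isBaseSet hfs.2.2.2.2.2.2).restrict_scalars' ℤ
  obtain ⟨-, -, h₁⟩ := hli.eq_zero_of_triple (p := -p) (q := -q) (r := 1 - x)
    (by linear_combination (norm := module) hax)
  obtain rfl : x = 1 := by omega
  exact Nat.dvd_one.1 (by exact_mod_cast hx)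

theorem IsEARS.coeff_eq_of_mem {R : Set V} {l n : ℕ} (hE : IsEARS B R l n) {α u w : V}
    (hbase : IsBaseSet ((LinearMap.ker B).mkQ '' R) {(LinearMap.ker B).mkQ α} 1) (hα : α ∈ R)
    (hu : u ∈ LinearMap.ker B) (hw : w ∈ LinearMap.ker B) {r x y : ℤ}
    (h : r • α + x • u + y • w ∈ R) : r = 1 ∨ r = -1 ∨ r = 2 ∨ r = -2 := by
  obtain ⟨ρ, hρ, hker⟩ := hE.exists_sub_zsmul_mem_ker hbase hα h
  rw [← Int.cast_smul_eq_zsmul ℝ ρ] at hker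
  have : (r : ℝ) = ρ := eq_of_sub_smul_mem_ker hE.symm (hE.root_nonisotropic α hα)
    (zsmul_add_sub_mem_ker hu hw r x y) hker
  rwa [show r = ρ by exact_mod_cast this]

theorem IsEARS.reflect_coords {R : Set V} {l n : ℕ} (hE : IsEARS B R l n) {α u w : V}
    (hα : B α α ≠ 0) (hu : u ∈ LinearMap.ker B) (hw : w ∈ LinearMap.ker B)
    {r x y r' x' y' t : ℤ} (hβ : r • α + x • u + y • w ∈ R) (hγ : r' • α + x' • u + y' • w ∈ R)
    (hr' : r' ≠ 0) (ht : t * r' = 2 * r) :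
    (-r) • α + (x - t * x') • u + (y - t * y') • w ∈ R := by
  have hs := srefl_eq_sub_smul (t := t) hE.symm hα (zsmul_add_sub_mem_ker hu hw r x y)
    (zsmul_add_sub_mem_ker hu hw r' x' y') (by exact_mod_cast hr') (by exact_mod_cast ht)
  have hmem := hE.reflect _ hγ ▸ Set.mem_image_of_mem (srefl B _) hβ
  rw [hs, Int.cast_smul_eq_zsmul] at hmem
  convert hmem using 1
  rw [show -r = r - t * r' by linarith]
  module

theorem IsEARS.exists_rootCoordinates {R : Set V} (hE : IsEARS B R 1 2) {α₁ α₀ a : V}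
    (hfs : IsFundamentalSet B R 1 {α₁, α₀} a) {k : V → ℕ} {g : V → Bool}
    (hkg : IsKG R a {α₁, α₀} k g)
    (hbase₁ : IsBaseSet ((LinearMap.ker B).mkQ '' R) {(LinearMap.ker B).mkQ α₁} 1) :
    ∃ r₀ : ℤ, (r₀ = -1 ∨ r₀ = -2) ∧ α₀ - r₀ • α₁ ∈ LinearMap.ker B ∧
      RootCoordinates (fun r x y : ℤ => r • α₁ + x • a + y • (α₀ - r₀ • α₁) ∈ R) r₀
        (k α₁) (k α₀) (g α₁) (g α₀) := by
  have hα₁ : α₁ ∈ R := hfs.2.2.2.1 (by simp)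
  have hα₀ : α₀ ∈ R := hfs.2.2.2.1 (by simp)
  have hbase := hfs.2.2.2.2.2.2
  obtain ⟨r₀, hr₀, hc⟩ := hE.exists_neg_sub_zsmul_mem_ker hbase₁ hbase hα₁ hα₀
  have ha : a ∈ LinearMap.ker B := (Set.ext_iff.1 hE.null_eq a).1 hfs.2.1
  have hli := (hE.linearIndependent_of_isBaseSet hbase).restrict_scalars' ℤ
  have hli₁ : LinearIndependent ℤ ![α₁, a] := LinearIndependent.pair_iff.2 fun s t h => by
    simpa using hli.eq_zero_of_triple (q := 0) (by simpa using h)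
  have hli₀ : LinearIndependent ℤ ![α₀, a] := LinearIndependent.pair_iff.2 fun s t h => by
    simpa using hli.eq_zero_of_triple (p := 0) (by simpa using h)
  refine ⟨r₀, hr₀, hc, fun hβ hγ ht => ?_, hE.coeff_eq_of_mem hbase₁ hα₁ ha hc,
    fun x => ?_, fun x => ?_, fun hg => ?_, fun hg => ?_, hE.eq_one_of_forall_dvd hfs hc⟩
  · refine hE.reflect_coords (hE.root_nonisotropic α₁ hα₁) ha hc hβ hγ ?_ ht
    rcases hE.coeff_eq_of_mem hbase₁ hα₁ ha hc hγ with h | h | h | h <;> rw [h] <;> decide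
  · simpa using hkg.add_zsmul_mem_iff (by simp) hli₁ x
  · convert hkg.add_zsmul_mem_iff (by simp) hli₀ x using 2
    module
  · simpa using hkg.two_zsmul_add_mem (by simp) hg
  · convert hkg.two_zsmul_add_mem (by simp) hg using 1
    module

end EllipticRootSystem

theorem stmt12_general {V : Type*} [AddCommGroup V] [Module ℝ V]
    (B : LinearMap.BilinForm ℝ V) (R : Set V)
    (hE : IsEARS B R 1 2)
    (α₀ α₁ : V) (a : V)
    (hfs : IsFundamentalSet B R 1 {α₁, α₀} a)
    (k : V → ℕ) (g : V → Bool) (hkg : IsKG R a {α₁, α₀} k g)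
    -- `{π(α₁)}` is a base of the irreducible finite root system `π(R)`
    (hbase1 : IsBaseSet ((LinearMap.ker B).mkQ '' R) {(LinearMap.ker B).mkQ α₁} 1)
    -- if `{π(α₀)}` is also a base of `π(R)` then `k(α₁) ≤ k(α₀)`
    (hmin : IsBaseSet ((LinearMap.ker B).mkQ '' R) {(LinearMap.ker B).mkQ α₀} 1 →
      k α₁ ≤ k α₀) :
    k α₁ = 1 ∧
      ((2 * B α₀ α₁ = -(2 : ℝ) * B α₀ α₀ ∧ k α₀ = 1 ∧ g α₀ = false ∧ g α₁ = false) ∨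
       (2 * B α₀ α₁ = -(2 : ℝ) * B α₀ α₀ ∧ k α₀ = 1 ∧ g α₀ = false ∧ g α₁ = true) ∨
       (2 * B α₀ α₁ = -(2 : ℝ) * B α₀ α₀ ∧ k α₀ = 1 ∧ g α₀ = true ∧ g α₁ = false) ∨
       (2 * B α₀ α₁ = -(2 : ℝ) * B α₀ α₀ ∧ k α₀ = 1 ∧ g α₀ = true ∧ g α₁ = true) ∨
       (2 * B α₀ α₁ = -(2 : ℝ) * B α₀ α₀ ∧ k α₀ = 2 ∧ g α₀ = false ∧ g α₁ = false) ∨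
       (2 * B α₀ α₁ = -(2 : ℝ) * B α₀ α₀ ∧ k α₀ = 2 ∧ g α₀ = true ∧ g α₁ = false) ∨
       (2 * B α₀ α₁ = -(1 : ℝ) * B α₀ α₀ ∧ k α₀ = 1 ∧ g α₀ = false ∧ g α₁ = false) ∨
       (2 * B α₀ α₁ = -(1 : ℝ) * B α₀ α₀ ∧ k α₀ = 1 ∧ g α₀ = false ∧ g α₁ = true) ∨
       (2 * B α₀ α₁ = -(1 : ℝ) * B α₀ α₀ ∧ k α₀ = 2 ∧ g α₀ = false ∧ g α₁ = false) ∨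
       (2 * B α₀ α₁ = -(1 : ℝ) * B α₀ α₀ ∧ k α₀ = 2 ∧ g α₀ = false ∧ g α₁ = true) ∨
       (2 * B α₀ α₁ = -(1 : ℝ) * B α₀ α₀ ∧ k α₀ = 4 ∧ g α₀ = false ∧ g α₁ = false)) := by
  obtain ⟨r₀, hr₀, hc, hT⟩ := hE.exists_rootCoordinates hfs hkg hbase1
  have hself : α₁ - ((1 : ℤ) : ℝ) • α₁ ∈ LinearMap.ker B := by simp
  rw [← Int.cast_smul_eq_zsmul ℝ] at hc
  have hB₀₁ := apply_eq_mul_of_sub_smul_mem_ker hE.symm hself hc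
  have hB₀₀ := apply_eq_mul_of_sub_smul_mem_ker hE.symm hc hc
  rcases hr₀ with rfl | rfl
  · have hneg : (LinearMap.ker B).mkQ α₀ = -(LinearMap.ker B).mkQ α₁ := by
      rw [← map_neg, Submodule.mkQ_apply, Submodule.mkQ_apply, Submodule.Quotient.eq]
      simpa using hc
    have hbase0 := hbase1.neg_singleton (hneg ▸ ⟨α₀, hfs.2.2.2.1 (by simp), rfl⟩)
    obtain ⟨hk₁, hk₀⟩ := hT.classify_of_neg_one (hmin (hneg ▸ hbase0))
    have hB : 2 * B α₀ α₁ = -(2 : ℝ) * B α₀ α₀ := by rw [hB₀₁, hB₀₀]; push_cast; ring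
    refine ⟨hk₁, ?_⟩
    rcases hk₀ with hk₀ | ⟨hk₀, hg₁⟩
    · cases g α₀ <;> cases g α₁ <;> simp [hB, hk₀]
    · cases g α₀ <;> simp [hB, hk₀, hg₁]
  · obtain ⟨hk₁, hg₀, hk₀⟩ := hT.classify_of_neg_two
    have hB : 2 * B α₀ α₁ = -(1 : ℝ) * B α₀ α₀ := by rw [hB₀₁, hB₀₀]; push_cast; ring
    refine ⟨hk₁, ?_⟩
    rcases hk₀ with hk₀ | hk₀ | ⟨hk₀, hg₁⟩
    · cases g α₁ <;> simp [hB, hk₀, hg₀]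
    · cases g α₁ <;> simp [hB, hk₀, hg₀]
    · simp [hB, hk₀, hg₀, hg₁]

/-- Classification of `((α₀^∨,α₁), k(α₀), g(α₀), g(α₁))` for a reduced
elliptic root system of rank `1` with fundamental-set `{α₁, α₀} ∪ {a}`
(`false` encodes `∅` and `true` encodes `2ℤ+1`). -/
theorem stmt12 {V : Type*} [AddCommGroup V] [Module ℝ V]
    (B : LinearMap.BilinForm ℝ V) (R : Set V)
    (hE : IsEARS B R 1 2) (hred : IsReducedRS R)
    (α₀ α₁ : V) (a : V) (hne : α₁ ≠ α₀)
    (hfs : IsFundamentalSet B R 1 {α₁, α₀} a)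
    (k : V → ℕ) (g : V → Bool) (hkg : IsKG R a {α₁, α₀} k g)
    -- `{π(α₁)}` is a base of the irreducible finite root system `π(R)`
    (hbase1 : IsBaseSet ((LinearMap.ker B).mkQ '' R) {(LinearMap.ker B).mkQ α₁} 1)
    -- if `{π(α₀)}` is also a base of `π(R)` then `k(α₁) ≤ k(α₀)`
    (hmin : IsBaseSet ((LinearMap.ker B).mkQ '' R) {(LinearMap.ker B).mkQ α₀} 1 →
      k α₁ ≤ k α₀) :
    k α₁ = 1 ∧
      ((2 * B α₀ α₁ = -(2 : ℝ) * B α₀ α₀ ∧ k α₀ = 1 ∧ g α₀ = false ∧ g α₁ = false) ∨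
       (2 * B α₀ α₁ = -(2 : ℝ) * B α₀ α₀ ∧ k α₀ = 1 ∧ g α₀ = false ∧ g α₁ = true) ∨
       (2 * B α₀ α₁ = -(2 : ℝ) * B α₀ α₀ ∧ k α₀ = 1 ∧ g α₀ = true ∧ g α₁ = false) ∨
       (2 * B α₀ α₁ = -(2 : ℝ) * B α₀ α₀ ∧ k α₀ = 1 ∧ g α₀ = true ∧ g α₁ = true) ∨
       (2 * B α₀ α₁ = -(2 : ℝ) * B α₀ α₀ ∧ k α₀ = 2 ∧ g α₀ = false ∧ g α₁ = false) ∨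
       (2 * B α₀ α₁ = -(2 : ℝ) * B α₀ α₀ ∧ k α₀ = 2 ∧ g α₀ = true ∧ g α₁ = false) ∨
       (2 * B α₀ α₁ = -(1 : ℝ) * B α₀ α₀ ∧ k α₀ = 1 ∧ g α₀ = false ∧ g α₁ = false) ∨
       (2 * B α₀ α₁ = -(1 : ℝ) * B α₀ α₀ ∧ k α₀ = 1 ∧ g α₀ = false ∧ g α₁ = true) ∨
       (2 * B α₀ α₁ = -(1 : ℝ) * B α₀ α₀ ∧ k α₀ = 2 ∧ g α₀ = false ∧ g α₁ = false) ∨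
       (2 * B α₀ α₁ = -(1 : ℝ) * B α₀ α₀ ∧ k α₀ = 2 ∧ g α₀ = false ∧ g α₁ = true) ∨
       (2 * B α₀ α₁ = -(1 : ℝ) * B α₀ α₀ ∧ k α₀ = 4 ∧ g α₀ = false ∧ g α₁ = false)) :=
  stmt12_general B R hE α₀ α₁ a hfs k g hkg hbase1 hmin
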